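/- arXiv:2501.17180 — 2 statements merged into one kernel-verified Lean document; each statement's English description precedes it below -/
import Mathlib

section
/- Let s > 1/2 be real and let n1, n2, n3 be nonzero integers with n1 + n2 + n3 = 0. Define Ψ_s(n1,n2,n3) = |n1|^{2s+1} sgn(n1) + |n2|^{2s+1} sgn(n2) + |n3|^{2s+1} sgn(n3). If |n1| ≥ |n2| ≥ |n3| and |n2| > 4|n3|, then sgn(n1) = -sgn(n2) and there is a constant C (depending only on s) such that |Ψ_s(n1,n2,n3)| ≤ C |n1|^{2s} |n3|. -/
noncomputable def PsiS (s : ℝ) (n1 n2 n3 : ℤ) : ℝ :=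
  (|n1| : ℝ) ^ (2 * s + 1) * Int.sign n1 + (|n2| : ℝ) ^ (2 * s + 1) * Int.sign n2
    + (|n3| : ℝ) ^ (2 * s + 1) * Int.sign n3

lemma sign_add_of_abs_lt {m k : ℤ} (h : |k| < |m|) : (m + k).sign = m.sign := by
  obtain ⟨h1, h2⟩ := abs_lt.mp h
  rcases lt_trichotomy m 0 with hm | hm | hm
  · rw [abs_of_neg hm] at h1 h2
    rw [Int.sign_eq_neg_one_of_neg (by omega), Int.sign_eq_neg_one_of_neg hm]
  · exfalso; rw [hm, abs_zero] at h; exact absurd h (abs_nonneg k).not_gt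
  · rw [abs_of_pos hm] at h1 h2
    rw [Int.sign_eq_one_of_pos (by omega), Int.sign_eq_one_of_pos hm]

lemma rpow_sub_rpow_le {a b p : ℝ} (hb : 0 < b) (hba : b ≤ a) (hp : 1 ≤ p) :
    a ^ p - b ^ p ≤ p * a ^ (p - 1) * (a - b) := by
  have ha : 0 < a := hb.trans_le hba
  have hs1 : (-1 : ℝ) ≤ -(a - b) / a := by
    rw [neg_div, neg_le_neg_iff, div_le_one ha]; linarith
  have hber := one_add_mul_self_le_rpow_one_add hs1 hp
  have hbeq : b = a * (1 + -(a - b) / a) := by field_simp; ring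
  have h2 : a ^ p * (1 + p * (-(a - b) / a)) ≤ (a * (1 + -(a - b) / a)) ^ p := by
    rw [Real.mul_rpow ha.le (by linarith)]
    exact mul_le_mul_of_nonneg_left hber (Real.rpow_nonneg ha.le p)
  rw [← hbeq] at h2
  have h3 : a ^ p * (1 + p * (-(a - b) / a)) = a ^ p - p * (a ^ p / a) * (a - b) := by
    field_simp; ring
  rw [h3] at h2
  rw [Real.rpow_sub_one ha.ne' p]
  linarith

theorem stmt0 (s : ℝ) (hs : 1 / 2 < s) :
    ∃ C : ℝ, 0 < C ∧ ∀ n1 n2 n3 : ℤ, n1 ≠ 0 → n2 ≠ 0 → n3 ≠ 0 →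
      n1 + n2 + n3 = 0 → |n2| ≤ |n1| → |n3| ≤ |n2| → 4 * |n3| < |n2| →
      Int.sign n1 = - Int.sign n2 ∧
        |PsiS s n1 n2 n3| ≤ C * (|n1| : ℝ) ^ (2 * s) * (|n3| : ℝ) := by
  refine ⟨2 * s + 2, by linarith, fun n1 n2 n3 h1 h2 h3 hsum hba hcb hc4 => ?_⟩
  have habs : |n3| < |n2| := by nlinarith [abs_nonneg n3]
  have hn1 : n1 = -(n2 + n3) := by omega
  have hsgn : Int.sign n1 = - Int.sign n2 := by
    rw [hn1, Int.sign_neg, sign_add_of_abs_lt habs]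
  refine ⟨hsgn, ?_⟩
  have hc1 : (1 : ℝ) ≤ |(n3 : ℝ)| := by exact_mod_cast Int.one_le_abs h3
  have hcb' : |(n3 : ℝ)| ≤ |(n2 : ℝ)| := by exact_mod_cast hcb
  have hba' : |(n2 : ℝ)| ≤ |(n1 : ℝ)| := by exact_mod_cast hba
  have habc : |(n1 : ℝ)| ≤ |(n2 : ℝ)| + |(n3 : ℝ)| := by
    have h : |n1| ≤ |n2| + |n3| := by
      rw [hn1, abs_neg]; exact abs_add_le _ _
    exact_mod_cast h
  set a : ℝ := |(n1 : ℝ)| with ha_def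
  set b : ℝ := |(n2 : ℝ)| with hb_def
  set c : ℝ := |(n3 : ℝ)| with hc_def
  have hc0 : 0 < c := by linarith
  have hb0 : 0 < b := by linarith
  have ha0 : 0 < a := by linarith
  have hp : (1 : ℝ) ≤ 2 * s + 1 := by linarith
  have key : a ^ (2 * s + 1) - b ^ (2 * s + 1) ≤ (2 * s + 1) * a ^ (2 * s) * c := by
    have h := rpow_sub_rpow_le hb0 hba' hp
    have hpe : 2 * s + 1 - 1 = 2 * s := by ring
    rw [hpe] at h
    have h4 : (2 * s + 1) * a ^ (2 * s) * (a - b) ≤ (2 * s + 1) * a ^ (2 * s) * c := by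
      have : (0:ℝ) ≤ (2 * s + 1) * a ^ (2 * s) := by positivity
      exact mul_le_mul_of_nonneg_left (by linarith) this
    linarith
  have hcp : c ^ (2 * s + 1) ≤ a ^ (2 * s) * c := by
    have h : c ^ (2 * s + 1) = c ^ (2 * s) * c := by
      rw [Real.rpow_add hc0, Real.rpow_one]
    rw [h]
    exact mul_le_mul_of_nonneg_right
      (Real.rpow_le_rpow hc0.le (hcb'.trans hba') (by linarith)) hc0.le
  have hmono : b ^ (2 * s + 1) ≤ a ^ (2 * s + 1) :=
    Real.rpow_le_rpow hb0.le hba' (by linarith)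
  have sgn_pm : ∀ n : ℤ, n ≠ 0 → |((Int.sign n : ℤ) : ℝ)| = 1 := by
    intro n hn
    rcases lt_trichotomy n 0 with h | h | h
    · rw [Int.sign_eq_neg_one_of_neg h]; norm_num
    · exact absurd h hn
    · rw [Int.sign_eq_one_of_pos h]; norm_num
  have hsgn2 : |((Int.sign n2 : ℤ) : ℝ)| = 1 := sgn_pm n2 h2
  have hsgn3 : |((Int.sign n3 : ℤ) : ℝ)| = 1 := sgn_pm n3 h3
  have hPsi : PsiS s n1 n2 n3
      = (b ^ (2 * s + 1) - a ^ (2 * s + 1)) * ((Int.sign n2 : ℤ) : ℝ)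
        + c ^ (2 * s + 1) * ((Int.sign n3 : ℤ) : ℝ) := by
    unfold PsiS
    rw [hsgn]
    push_cast
    ring
  rw [hPsi]
  calc |(b ^ (2 * s + 1) - a ^ (2 * s + 1)) * ((Int.sign n2 : ℤ) : ℝ)
        + c ^ (2 * s + 1) * ((Int.sign n3 : ℤ) : ℝ)|
      ≤ |(b ^ (2 * s + 1) - a ^ (2 * s + 1)) * ((Int.sign n2 : ℤ) : ℝ)|
        + |c ^ (2 * s + 1) * ((Int.sign n3 : ℤ) : ℝ)| := abs_add_le _ _
    _ = |b ^ (2 * s + 1) - a ^ (2 * s + 1)| + |c ^ (2 * s + 1)| := by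
        rw [abs_mul, abs_mul, hsgn2, hsgn3, mul_one, mul_one]
    _ = (a ^ (2 * s + 1) - b ^ (2 * s + 1)) + c ^ (2 * s + 1) := by
        rw [abs_sub_comm, abs_of_nonneg (by linarith),
          abs_of_nonneg (Real.rpow_nonneg hc0.le _)]
    _ ≤ (2 * s + 1) * a ^ (2 * s) * c + a ^ (2 * s) * c := add_le_add key hcp
    _ = (2 * s + 2) * a ^ (2 * s) * c := by ring
end

section
/- Let 0 < s < 1/2, t a nonzero real with |t| ≤ 1, N a large integer, and A = ⌊δN⌋ for small fixed δ ∈ (0, 1/10). For integers n1 ∈ [N/2 + 3A/4, N/2 + A], n2 ∈ [-N/2, -N/2 + A/4], n3 = -(n1 + n2), one has n3 ∈ [-5A/4, -3A/4] and |Ψ_s(n1,n2,n3)| ≥ c A N^{2s} for a constant c = c(s, δ) > 0, where Ψ_s(n1,n2,n3) = |n1|^{2s+1} sgn(n1) + |n2|^{2s+1} sgn(n2) + |n3|^{2s+1} sgn(n3). -/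
set_option maxHeartbeats 800000


lemma key_ineq (s a b : ℝ) (hs : 0 < s) (ha : 0 < a) (hb : 0 < b) (hba : b ≤ a) :
    2 * s * (a ^ (2 * s) * b) ≤ (a + b) ^ (2 * s + 1) - a ^ (2 * s + 1) - b ^ (2 * s + 1) := by
  have hba' : 0 ≤ b / a := by positivity
  have hbern : 1 + (2 * s + 1) * (b / a) ≤ (1 + b / a) ^ (2 * s + 1) :=
    one_add_mul_self_le_rpow_one_add (by linarith) (by linarith)
  have h1 : a ^ (2 * s + 1) + (2 * s + 1) * (a ^ (2 * s) * b) ≤ (a + b) ^ (2 * s + 1) := by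
    have heq : (a + b) ^ (2 * s + 1) = a ^ (2 * s + 1) * (1 + b / a) ^ (2 * s + 1) := by
      rw [← Real.mul_rpow ha.le (by positivity)]
      congr 1
      field_simp
    rw [heq]
    have := mul_le_mul_of_nonneg_left hbern (le_of_lt (Real.rpow_pos_of_pos ha (2 * s + 1)))
    calc a ^ (2 * s + 1) + (2 * s + 1) * (a ^ (2 * s) * b)
        = a ^ (2 * s + 1) * (1 + (2 * s + 1) * (b / a)) := by
          rw [show (2 : ℝ) * s + 1 = 2 * s + 1 from rfl]
          have : a ^ (2 * s + 1) = a ^ (2 * s) * a := by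
            rw [Real.rpow_add ha, Real.rpow_one]
          rw [this]; field_simp
      _ ≤ a ^ (2 * s + 1) * (1 + b / a) ^ (2 * s + 1) := this
  have h2 : b ^ (2 * s + 1) ≤ a ^ (2 * s) * b := by
    have : b ^ (2 * s + 1) = b ^ (2 * s) * b := by
      rw [Real.rpow_add hb, Real.rpow_one]
    rw [this]
    exact mul_le_mul_of_nonneg_right (Real.rpow_le_rpow hb.le hba (by positivity)) hb.le
  nlinarith [h1, h2]

theorem stmt17 (s δ : ℝ) (hs0 : 0 < s) (hs : s < 1 / 2) (hδ0 : 0 < δ) (hδ : δ < 1 / 10) :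
    ∃ c : ℝ, 0 < c ∧ ∃ N0 : ℕ, ∀ N : ℕ, N0 ≤ N →
      ∀ n1 n2 n3 : ℤ,
        ((N : ℝ) / 2 + 3 * (⌊δ * (N : ℝ)⌋ : ℝ) / 4 ≤ (n1 : ℝ) ∧
          (n1 : ℝ) ≤ (N : ℝ) / 2 + (⌊δ * (N : ℝ)⌋ : ℝ)) →
        (-(N : ℝ) / 2 ≤ (n2 : ℝ) ∧ (n2 : ℝ) ≤ -(N : ℝ) / 2 + (⌊δ * (N : ℝ)⌋ : ℝ) / 4) →
        n3 = -(n1 + n2) →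
        (-(5 * (⌊δ * (N : ℝ)⌋ : ℝ) / 4) ≤ (n3 : ℝ) ∧ (n3 : ℝ) ≤ -(3 * (⌊δ * (N : ℝ)⌋ : ℝ) / 4)) ∧
          c * (⌊δ * (N : ℝ)⌋ : ℝ) * (N : ℝ) ^ (2 * s) ≤ |PsiS s n1 n2 n3| := by
  refine ⟨3 * s / 2 * (2 / 5) ^ (2 * s), by positivity, ⌈1 / δ⌉₊ + 1,
    fun N hN n1 n2 n3 h1 h2 h3 => ?_⟩
  set A : ℝ := (⌊δ * (N : ℝ)⌋ : ℝ) with hAdef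
  have hNR : (1 / δ : ℝ) ≤ (N : ℝ) := by
    calc (1 / δ : ℝ) ≤ (⌈1 / δ⌉₊ : ℝ) := Nat.le_ceil _
      _ ≤ (N : ℝ) := by exact_mod_cast le_trans (Nat.le_succ _) hN
  have hN1 : (1 : ℝ) ≤ (N : ℝ) := by
    have : (1 : ℕ) ≤ N := le_trans (Nat.le_add_left 1 _) hN
    exact_mod_cast this
  have hδN : 1 ≤ δ * (N : ℝ) := by
    rw [div_le_iff₀ hδ0] at hNR; linarith [hNR]
  have hA1 : (1 : ℝ) ≤ A := by
    have h : (1 : ℤ) ≤ ⌊δ * (N : ℝ)⌋ := Int.le_floor.mpr (by exact_mod_cast hδN)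
    rw [hAdef]; exact_mod_cast h
  have hAδ : A ≤ δ * (N : ℝ) := Int.floor_le _
  have hAN : A ≤ (N : ℝ) / 10 := by nlinarith [hAδ, hN1]
  have h3R : (n3 : ℝ) = -((n1 : ℝ) + (n2 : ℝ)) := by rw [h3]; push_cast; ring
  have hn3b : -(5 * A / 4) ≤ (n3 : ℝ) ∧ (n3 : ℝ) ≤ -(3 * A / 4) := by
    constructor <;> [linarith [h1.2, h2.2]; linarith [h1.1, h2.1]]
  refine ⟨hn3b, ?_⟩
  -- signs
  have hn1pos : 0 < n1 := by
    have : (0 : ℝ) < (n1 : ℝ) := by linarith [h1.1]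
    exact_mod_cast this
  have hn2neg : n2 < 0 := by
    have : (n2 : ℝ) < 0 := by linarith [h2.2]
    exact_mod_cast this
  have hn3neg : n3 < 0 := by
    have : (n3 : ℝ) < 0 := by linarith [hn3b.2]
    exact_mod_cast this
  set a : ℝ := -(n2 : ℝ) with hadef
  set b : ℝ := -(n3 : ℝ) with hbdef
  have ha : (2 : ℝ) / 5 * (N : ℝ) ≤ a := by
    simp only [hadef]; linarith [h2.2, hAN]
  have hb : 3 * A / 4 ≤ b := by simp only [hbdef]; linarith [hn3b.2]
  have ha0 : 0 < a := by linarith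
  have hb0 : 0 < b := by linarith
  have hba : b ≤ a := by
    have : b ≤ 5 * A / 4 := by simp only [hbdef]; linarith [hn3b.1]
    linarith
  have hab : (n1 : ℝ) = a + b := by simp only [hadef, hbdef]; linarith [h3R]
  -- compute PsiS
  have hPsi : PsiS s n1 n2 n3
      = (a + b) ^ (2 * s + 1) - a ^ (2 * s + 1) - b ^ (2 * s + 1) := by
    unfold PsiS
    rw [Int.sign_eq_one_of_pos hn1pos, Int.sign_eq_neg_one_of_neg hn2neg,
      Int.sign_eq_neg_one_of_neg hn3neg]
    push_cast
    rw [abs_of_pos (show (0 : ℝ) < (n1 : ℝ) by exact_mod_cast hn1pos),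
      abs_of_neg (show (n2 : ℝ) < 0 by exact_mod_cast hn2neg),
      abs_of_neg (show (n3 : ℝ) < 0 by exact_mod_cast hn3neg),
      ← hadef, ← hbdef, hab]
    ring
  have hkey := key_ineq s a b hs0 ha0 hb0 hba
  have hlow : 2 * s * (a ^ (2 * s) * b) ≤ PsiS s n1 n2 n3 := by rw [hPsi]; exact hkey
  have hPsipos : 0 ≤ PsiS s n1 n2 n3 := le_trans (by positivity) hlow
  rw [abs_of_nonneg hPsipos]
  refine le_trans ?_ hlow
  have hrpow : (2 / 5 : ℝ) ^ (2 * s) * (N : ℝ) ^ (2 * s) ≤ a ^ (2 * s) := by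
    rw [← Real.mul_rpow (by norm_num) (by positivity)]
    exact Real.rpow_le_rpow (by positivity) ha (by positivity)
  have hN0 : (0 : ℝ) < (N : ℝ) ^ (2 * s) := Real.rpow_pos_of_pos (by linarith) _
  calc 3 * s / 2 * (2 / 5) ^ (2 * s) * A * (N : ℝ) ^ (2 * s)
      = 2 * s * (((2 / 5 : ℝ) ^ (2 * s) * (N : ℝ) ^ (2 * s)) * (3 * A / 4)) := by ring
    _ ≤ 2 * s * (a ^ (2 * s) * b) := by
        apply mul_le_mul_of_nonneg_left _ (by positivity)
        exact mul_le_mul hrpow hb (by positivity) (by positivity)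
end
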